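/- Let Q ⊆ P be finite nonempty sets in ℝ² and let x ∈ P. Then there exists a unit vector u ∈ ℝ² such that dist(x, conv(Q)) ≤ w(u,P) − w(u,Q), where conv(Q) is the convex hull of Q and dist denotes Euclidean distance from a point to a set. -/

import Mathlib

open Real RealInnerProductSpace

/-- The directional width of a finite nonempty point set `P` in direction `u`:
`max_{p ∈ P} ⟪u, p⟫ - min_{p ∈ P} ⟪u, p⟫`. -/
noncomputable def dirWidth (P : Finset (EuclideanSpace ℝ (Fin 2))) (hP : P.Nonempty)
    (u : EuclideanSpace ℝ (Fin 2)) : ℝ :=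
  P.sup' hP (fun p => ⟪u, p⟫) - P.inf' hP (fun p => ⟪u, p⟫)

/-! If `y` is the point of `conv Q` nearest to `x`, the unit vector `u` pointing from `y` to `x`
separates: `⟪u, q⟫ ≤ ⟪u, y⟫ = ⟪u, x⟫ - dist(x, conv Q)` for every `q ∈ Q`, while `x ∈ P`, so the
maximum of `⟪u, ·⟫` drops by at least that distance from `P` to `Q`; the minimum can only rise. -/

section Separation

variable {E : Type*} [NormedAddCommGroup E] [InnerProductSpace ℝ E]

theorem exists_norm_eq_one_inner_add_infDist_le {K : Set E} (hKc : IsCompact K)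
    (hK : Convex ℝ K) (hKne : K.Nonempty) {x : E} (hx : x ∉ K) :
    ∃ u : E, ‖u‖ = 1 ∧ ∀ k ∈ K, ⟪u, k⟫ + Metric.infDist x K ≤ ⟪u, x⟫ := by
  obtain ⟨y, hyK, hdist⟩ := hKc.exists_infDist_eq_dist hKne x
  have hv : x - y ≠ 0 := sub_ne_zero.mpr (ne_of_mem_of_not_mem hyK hx).symm
  have hproj : ∀ k ∈ K, ⟪x - y, k - y⟫ ≤ 0 := by
    refine (norm_eq_iInf_iff_real_inner_le_zero hK hyK).mp ?_
    simp only [← dist_eq_norm]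
    rw [← hdist, Metric.infDist_eq_iInf]
  refine ⟨‖x - y‖⁻¹ • (x - y), norm_smul_inv_norm hv, fun k hk => ?_⟩
  have hnorm : 0 < ‖x - y‖ := norm_pos_iff.mpr hv
  have hsep : ⟪x - y, k⟫ + ‖x - y‖ * ‖x - y‖ ≤ ⟪x - y, x⟫ := by
    have h := hproj k hk
    rw [inner_sub_right] at h
    have hx_split : ⟪x - y, x⟫ = ⟪x - y, y⟫ + ‖x - y‖ * ‖x - y‖ := by
      rw [← real_inner_self_eq_norm_mul_norm, inner_sub_right (x - y) x y]; ring
    linarith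
  rw [hdist, dist_eq_norm, real_inner_smul_left, real_inner_smul_left]
  calc ‖x - y‖⁻¹ * ⟪x - y, k⟫ + ‖x - y‖
      = ‖x - y‖⁻¹ * (⟪x - y, k⟫ + ‖x - y‖ * ‖x - y‖) := by field_simp
    _ ≤ ‖x - y‖⁻¹ * ⟪x - y, x⟫ := by gcongr

end Separation

theorem dirWidth_mono {P Q : Finset (EuclideanSpace ℝ (Fin 2))} (hP : P.Nonempty)
    (hQ : Q.Nonempty) (hQP : Q ⊆ P) (u : EuclideanSpace ℝ (Fin 2)) :
    dirWidth Q hQ u ≤ dirWidth P hP u :=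
  sub_le_sub (Finset.sup'_mono _ hQP hQ) (Finset.inf'_mono _ hQP hQ)

theorem sup'_sub_sup'_le_dirWidth_sub_dirWidth {P Q : Finset (EuclideanSpace ℝ (Fin 2))}
    (hP : P.Nonempty) (hQ : Q.Nonempty) (hQP : Q ⊆ P) (u : EuclideanSpace ℝ (Fin 2)) :
    P.sup' hP (fun p => ⟪u, p⟫) - Q.sup' hQ (fun p => ⟪u, p⟫) ≤
      dirWidth P hP u - dirWidth Q hQ u := by
  have := Finset.inf'_mono (fun p => ⟪u, p⟫) hQP hQ
  simp only [dirWidth]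
  linarith

theorem separating_direction
    (P Q : Finset (EuclideanSpace ℝ (Fin 2))) (hP : P.Nonempty) (hQ : Q.Nonempty)
    (hQP : Q ⊆ P) (x : EuclideanSpace ℝ (Fin 2)) (hx : x ∈ P) :
    ∃ u : EuclideanSpace ℝ (Fin 2), ‖u‖ = 1 ∧
      Metric.infDist x (convexHull ℝ (Q : Set (EuclideanSpace ℝ (Fin 2)))) ≤
        dirWidth P hP u - dirWidth Q hQ u := by
  set K := convexHull ℝ (Q : Set (EuclideanSpace ℝ (Fin 2)))
  by_cases hxK : x ∈ K
  · refine ⟨EuclideanSpace.single 0 1, by simp, ?_⟩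
    rw [Metric.infDist_zero_of_mem hxK, sub_nonneg]
    exact dirWidth_mono hP hQ hQP _
  obtain ⟨u, hu, hsep⟩ := exists_norm_eq_one_inner_add_infDist_le
    (Q.finite_toSet.isCompact_convexHull ℝ) (convex_convexHull ℝ _)
    (hQ.to_set.mono (subset_convexHull ℝ _)) hxK
  refine ⟨u, hu, le_trans ?_ (sup'_sub_sup'_le_dirWidth_sub_dirWidth hP hQ hQP u)⟩
  have hsupQ : Q.sup' hQ (fun p => ⟪u, p⟫) + Metric.infDist x K ≤ ⟪u, x⟫ := by
    rw [Finset.sup'_add]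
    exact Finset.sup'_le _ _ fun q hq => hsep q (subset_convexHull ℝ _ hq)
  have hxP : ⟪u, x⟫ ≤ P.sup' hP (fun p => ⟪u, p⟫) := Finset.le_sup' (fun p => ⟪u, p⟫) hx
  linarith
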